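/- For every n ≥ 1 and every subset I ⊆ {1,…,n}, the identity ψ₂(g_I) = ψ₁(g_I) − (n−2)·(D ⊗ ξ_I) holds in W = k[D] ⊗ Aₙ[v]. In particular, when n = 2, ψ₁(g_I) = ψ₂(g_I) for all I. -/

import Mathlib

/-! ### Conformal algebras: basic definitions -/

/-- A conformal algebra over a field `k`: a `k`-vector space with a linear map `D`
and a family of bilinear `n`-th products satisfying (C1) locality, (C2) and (C3). -/
structure ConfAlg (k : Type) [Field k] (C : Type) [AddCommGroup C] [Module k C] where
  Dmap : C →ₗ[k] C
  prod : ℕ → C →ₗ[k] C →ₗ[k] C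
  locality : ∀ a b : C, ∃ N : ℕ, ∀ m, N ≤ m → prod m a b = 0
  axC2 : ∀ (m : ℕ) (a b : C), prod m (Dmap a) b = -((m : k)) • prod (m - 1) a b
  axC3 : ∀ (m : ℕ) (a b : C),
    prod m a (Dmap b) = Dmap (prod m a b) + (m : k) • prod (m - 1) a b

section BasicDefs

variable {k : Type} [Field k] {C : Type} [AddCommGroup C] [Module k C]

/-- Left associativity identity for a conformal algebra. -/
def ConfAlg.IsAssoc (A : ConfAlg k C) : Prop :=
  ∀ (nn m : ℕ) (a b c : C),
    A.prod m (A.prod nn a b) c =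
      ∑ s ∈ Finset.range (nn + 1),
        ((-1 : k) ^ s * (nn.choose s : k)) • A.prod (nn - s) a (A.prod (m + s) b c)

/-- A ℤ₂-grading of a conformal algebra: `grade false` is the even part,
`grade true` the odd part. -/
structure ConfGrading (A : ConfAlg k C) where
  grade : Bool → Submodule k C
  inf_bot : grade false ⊓ grade true = ⊥
  sup_top : grade false ⊔ grade true = ⊤
  D_mem : ∀ (i : Bool), ∀ x ∈ grade i, A.Dmap x ∈ grade i
  prod_mem : ∀ (i j : Bool) (m : ℕ) (x y : C), x ∈ grade i → y ∈ grade j →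
    A.prod m x y ∈ grade (xor i j)

/-- The "conjugate" product `{b ∘ₘ a} = ∑_{s ≥ 0} ((-1)^{m+s}/s!) • Dˢ (b ∘_{m+s} a)`,
a finite sum by locality, expressed via `finsum`. -/
noncomputable def cbrR (D : C →ₗ[k] C) (P : ℕ → C →ₗ[k] C →ₗ[k] C)
    (m : ℕ) (b a : C) : C :=
  ∑ᶠ s : ℕ, ((-1 : k) ^ (m + s) * ((Nat.factorial s : k))⁻¹) • (D ^ s) (P (m + s) b a)

/-- The super-commutator `[a ∘ₘ b] = a ∘ₘ b - (-1)^{p(a)p(b)} {b ∘ₘ a}` for homogeneous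
`a, b` of parities `pa, pb` (`false` = even, `true` = odd). -/
noncomputable def sbrR (D : C →ₗ[k] C) (P : ℕ → C →ₗ[k] C →ₗ[k] C)
    (pa pb : Bool) (m : ℕ) (a b : C) : C :=
  P m a b - (if pa && pb then (-1 : k) else 1) • cbrR D P m b a

/-- The defining relations of the Lie conformal superalgebra `Wₙ`, for homogeneous
elements `V` (even), `X i`, `Pd i` (odd) of an associative conformal algebra with
derivation `D` and products `P`. -/
noncomputable def WRelsR (D : C →ₗ[k] C) (P : ℕ → C →ₗ[k] C →ₗ[k] C) {n : ℕ}
    (V : C) (X Pd : Fin n → C) : Prop :=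
  (∀ i j, sbrR D P true true 0 (X i) (X j) = - sbrR D P true true 0 (X j) (X i)) ∧
  (∀ (m : ℕ) (i j), sbrR D P true true m (Pd i) (Pd j) = 0) ∧
  (∀ i j, sbrR D P true true 0 (Pd j) (X i) = if i = j then V else 0) ∧
  (∀ i, sbrR D P false true 0 V (X i) = D (X i)) ∧
  (∀ i, sbrR D P true false 0 (X i) V = D (X i)) ∧
  (∀ i, sbrR D P true false 1 (X i) V = (2 : k) • X i) ∧
  (∀ j, sbrR D P true false 0 (Pd j) V = 0) ∧
  (∀ j, sbrR D P true false 1 (Pd j) V = Pd j) ∧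
  (∀ i j, sbrR D P true true 0 (X i) (X j)
      = ((2 : k))⁻¹ • D (sbrR D P true true 1 (X i) (X j))) ∧
  (sbrR D P false false 0 V V = D V) ∧
  (sbrR D P false false 1 V V = (2 : k) • V) ∧
  (∀ m, 2 ≤ m →
    (∀ i j, sbrR D P true true m (X i) (X j) = 0) ∧
    (∀ j, sbrR D P false true m V (Pd j) = 0) ∧
    (∀ i j, sbrR D P true true m (X i) (Pd j) = 0) ∧
    (∀ i, sbrR D P false true m V (X i) = 0) ∧
    sbrR D P false false m V V = 0)

end BasicDefs
set_option maxSynthPendingDepth 5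

/-! ### The algebra `Aₙ` and the conformal algebra `W = k[D] ⊗ Aₙ[v]` -/

/-- Generators of the algebra `Aₙ`: `xi i` stands for `ξᵢ`, `pa i` for `∂ᵢ`. -/
inductive WGen (n : ℕ) : Type
  | xi : Fin n → WGen n
  | pa : Fin n → WGen n

/-- The defining relations of `Aₙ`:
`ξᵢξⱼ + ξⱼξᵢ = 0`, `∂ᵢ∂ⱼ + ∂ⱼ∂ᵢ = 0`, `∂ᵢξⱼ + ξⱼ∂ᵢ = δᵢⱼ·1`. -/
inductive ARel (k : Type) [Field k] (n : ℕ) :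
    FreeAlgebra k (WGen n) → FreeAlgebra k (WGen n) → Prop
  | xixi (i j : Fin n) : ARel k n
      (FreeAlgebra.ι k (WGen.xi i) * FreeAlgebra.ι k (WGen.xi j)
        + FreeAlgebra.ι k (WGen.xi j) * FreeAlgebra.ι k (WGen.xi i)) 0
  | papa (i j : Fin n) : ARel k n
      (FreeAlgebra.ι k (WGen.pa i) * FreeAlgebra.ι k (WGen.pa j)
        + FreeAlgebra.ι k (WGen.pa j) * FreeAlgebra.ι k (WGen.pa i)) 0
  | paxi (i j : Fin n) : ARel k n
      (FreeAlgebra.ι k (WGen.pa i) * FreeAlgebra.ι k (WGen.xi j)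
        + FreeAlgebra.ι k (WGen.xi j) * FreeAlgebra.ι k (WGen.pa i))
      (if i = j then 1 else 0)

/-- The algebra `Aₙ`. -/
abbrev An (k : Type) [Field k] (n : ℕ) := RingQuot (ARel k n)

/-- `Aₙ[v]`: polynomials over `Aₙ` in the variable `v` (= `Polynomial.X`). -/
abbrev Av (k : Type) [Field k] (n : ℕ) := Polynomial (An k n)

/-- `W = k[D] ⊗ Aₙ[v]`, realized as polynomials in the (outer) variable `D`
with coefficients in `Aₙ[v]`; the element `Dᵗ ⊗ w` is `(monomial t) w`. -/
abbrev Wc (k : Type) [Field k] (n : ℕ) := Polynomial (Av k n)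

/-- The generator `ξᵢ ∈ Aₙ`. -/
noncomputable def xg (k : Type) [Field k] (n : ℕ) (i : Fin n) : An k n :=
  RingQuot.mkAlgHom k (ARel k n) (FreeAlgebra.ι k (WGen.xi i))

/-- The generator `∂ᵢ ∈ Aₙ`. -/
noncomputable def dg (k : Type) [Field k] (n : ℕ) (i : Fin n) : An k n :=
  RingQuot.mkAlgHom k (ARel k n) (FreeAlgebra.ι k (WGen.pa i))

/-- The element `v = 1 ⊗ v ∈ W`. -/
noncomputable def vW (k : Type) [Field k] (n : ℕ) : Wc k n :=
  Polynomial.C Polynomial.X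

/-- The element `ξᵢ = 1 ⊗ ξᵢ ∈ W`. -/
noncomputable def xiW (k : Type) [Field k] (n : ℕ) (i : Fin n) : Wc k n :=
  Polynomial.C (Polynomial.C (xg k n i))

/-- The element `∂ᵢ = 1 ⊗ ∂ᵢ ∈ W`. -/
noncomputable def paW (k : Type) [Field k] (n : ℕ) (i : Fin n) : Wc k n :=
  Polynomial.C (Polynomial.C (dg k n i))

/-- The element `v - D = 1 ⊗ v - D ⊗ 1 ∈ W`. -/
noncomputable def vmD (k : Type) [Field k] (n : ℕ) : Wc k n :=
  (Polynomial.C (Polynomial.X : Av k n) : Wc k n) - (Polynomial.X : Wc k n)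

/-- The map `D` on `W`: multiplication by the outer variable. -/
noncomputable def Dm (k : Type) [Field k] (n : ℕ) : Wc k n →ₗ[k] Wc k n :=
  LinearMap.mulLeft k (Polynomial.X : Wc k n)

/-- The condition characterizing the conformal products of `W`:
`(1 ⊗ f) ∘ₘ (1 ⊗ g) = 1 ⊗ f·(∂ᵐ g/∂vᵐ)` together with axioms (C2) and (C3). -/
def IsWProd (k : Type) [Field k] (n : ℕ)
    (P : ℕ → Wc k n →ₗ[k] Wc k n →ₗ[k] Wc k n) : Prop :=
  (∀ (m : ℕ) (f g : Av k n),
      P m (Polynomial.C f) (Polynomial.C g)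
        = Polynomial.C (f * (fun q => Polynomial.derivative q)^[m] g)) ∧
  (∀ (m : ℕ) (a b : Wc k n), P m (Dm k n a) b = -((m : k)) • P (m - 1) a b) ∧
  (∀ (m : ℕ) (a b : Wc k n),
      P m a (Dm k n b) = Dm k n (P m a b) + (m : k) • P (m - 1) a b)

/-- The locality function `N_W(x,y) = min {N | x ∘ₘ y = 0 for all m ≥ N}`. -/
noncomputable def locNW (k : Type) [Field k] (n : ℕ)
    (P : ℕ → Wc k n →ₗ[k] Wc k n →ₗ[k] Wc k n) (x y : Wc k n) : ℕ :=
  sInf {N : ℕ | ∀ m, N ≤ m → P m x y = 0}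

/-- The smallest `D`-invariant subspace of `W` closed under all the products and
containing a set `S`. -/
noncomputable def confCl (k : Type) [Field k] (n : ℕ)
    (P : ℕ → Wc k n →ₗ[k] Wc k n →ₗ[k] Wc k n) (S : Set (Wc k n)) :
    Submodule k (Wc k n) :=
  sInf {U : Submodule k (Wc k n) | S ⊆ U ∧ (∀ x ∈ U, Dm k n x ∈ U) ∧
    ∀ (m : ℕ), ∀ x ∈ U, ∀ y ∈ U, P m x y ∈ U}

/-- The conformal subalgebra `C₁ ⊆ W`, generated by `v - D`, `(v - D)ξᵢ`, `∂ᵢ`. -/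
noncomputable def C1sub (k : Type) [Field k] (n : ℕ)
    (P : ℕ → Wc k n →ₗ[k] Wc k n →ₗ[k] Wc k n) : Submodule k (Wc k n) :=
  confCl k n P
    ({vmD k n} ∪ Set.range (fun i => vmD k n * xiW k n i) ∪ Set.range (paW k n))

/-- The conformal subalgebra `C₂ ⊆ W`, generated by `v`, `vξᵢ`, `∂ᵢ`. -/
noncomputable def C2sub (k : Type) [Field k] (n : ℕ)
    (P : ℕ → Wc k n →ₗ[k] Wc k n →ₗ[k] Wc k n) : Submodule k (Wc k n) :=
  confCl k n P
    ({vW k n} ∪ Set.range (fun i => vW k n * xiW k n i) ∪ Set.range (paW k n))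
/-! ### The elements `ξ_I`, `∂ᵢ(ξ_I)` and `ψ₁(g_I)`, `ψ₂(g_I)` -/

/-- `ξ_I = ξ_{i₁} ⋯ ξ_{i_r} ∈ Aₙ` for `I = {i₁ < … < i_r}` (`ξ_∅ = 1`). -/
noncomputable def xiI (k : Type) [Field k] (n : ℕ) (I : Finset (Fin n)) : An k n :=
  ((I.sort (· ≤ ·)).map (xg k n)).prod

/-- `∂_J = ∂_{j₁} ⋯ ∂_{j_q} ∈ Aₙ` for `J = {j₁ < … < j_q}` (`∂_∅ = 1`). -/
noncomputable def dgJ (k : Type) [Field k] (n : ℕ) (J : Finset (Fin n)) : An k n :=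
  ((J.sort (· ≤ ·)).map (dg k n)).prod

/-- `∂ᵢ(ξ_I) = (-1)^{t-1} ξ_{I∖{i}}` if `i` is the `t`-th element of `I`, else `0`. -/
noncomputable def dxi (k : Type) [Field k] (n : ℕ) (i : Fin n) (I : Finset (Fin n)) :
    An k n :=
  if i ∈ I then ((-1 : k) ^ (I.filter (fun j => j < i)).card) • xiI k n (I.erase i)
  else 0

/-- The embedding `a ↦ 1 ⊗ a : Aₙ → W`. -/
noncomputable def embA (k : Type) [Field k] (n : ℕ) (a : An k n) : Wc k n :=
  Polynomial.C (Polynomial.C a)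

/-- The map `a ↦ D ⊗ a : Aₙ → W`. -/
noncomputable def embD (k : Type) [Field k] (n : ℕ) (a : An k n) : Wc k n :=
  Polynomial.monomial 1 (Polynomial.C a)

/-- `ψ₁(g_I) = (2-|I|)(v-D)ξ_I + (-1)^{|I|} ∑ᵢ (D ⊗ ξᵢξ_I∂ᵢ + 1 ⊗ ∂ᵢ(ξ_I)∂ᵢ)`. -/
noncomputable def ψ1 (k : Type) [Field k] (n : ℕ) (I : Finset (Fin n)) : Wc k n :=
  ((2 : k) - (I.card : k)) • (vmD k n * embA k n (xiI k n I))
    + ((-1 : k) ^ I.card) •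
      ∑ i : Fin n,
        (embD k n (xg k n i * xiI k n I * dg k n i) + embA k n (dxi k n i I * dg k n i))

/-- `ψ₂(g_I) = (2-|I|)·vξ_I - ∑ᵢ (D ⊗ ∂ᵢξᵢξ_I + 1 ⊗ ∂ᵢ·∂ᵢ(ξ_I))`. -/
noncomputable def ψ2 (k : Type) [Field k] (n : ℕ) (I : Finset (Fin n)) : Wc k n :=
  ((2 : k) - (I.card : k)) • (vW k n * embA k n (xiI k n I))
    - ∑ i : Fin n,
        (embD k n (dg k n i * xg k n i * xiI k n I) + embA k n (dg k n i * dxi k n i I))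

/-!
Commuting `∂ᵢ` past `ξ_I` in `Aₙ` gives `∂ᵢ ξ_I = (-1)^{|I|} ξ_I ∂ᵢ + ∂ᵢ(ξ_I)`, and
`∑ᵢ ξᵢ ∂ᵢ(ξ_I) = |I| ξ_I` (Euler's identity); both follow by induction on `I`, adding a
new minimal element. Consequently `∂ᵢ ξᵢ ξ_I = ξ_I - (-1)^{|I|} ξᵢ ξ_I ∂ᵢ - ξᵢ ∂ᵢ(ξ_I)` and
`∂ᵢ ∂ᵢ(ξ_I) = -(-1)^{|I|} ∂ᵢ(ξ_I) ∂ᵢ`, so the sum in `ψ₂(g_I)` is `(n - |I|) D ξ_I` minus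
`(-1)^{|I|}` times the sum in `ψ₁(g_I)`. Writing `(v - D) ξ_I = v ξ_I - D ξ_I` accounts for
the rest.
-/

open Finset

section

variable {k : Type} [Field k] {n : ℕ}

theorem xg_mul_xg (i j : Fin n) : xg k n i * xg k n j = -(xg k n j * xg k n i) := by
  have h := RingQuot.mkAlgHom_rel k (ARel.xixi (k := k) i j)
  rw [map_add, map_mul, map_mul, map_zero] at h
  exact eq_neg_of_add_eq_zero_left h

theorem dg_mul_xg (i j : Fin n) :
    dg k n i * xg k n j = (if i = j then 1 else 0) - xg k n j * dg k n i := by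
  have h := RingQuot.mkAlgHom_rel k (ARel.paxi (k := k) i j)
  rw [apply_ite (RingQuot.mkAlgHom k (ARel k n)), map_one, map_zero,
    map_add, map_mul, map_mul] at h
  exact eq_sub_of_add_eq h

theorem xiI_empty : xiI k n ∅ = 1 := by
  simp [xiI]

theorem xiI_insert_of_lt {a : Fin n} {s : Finset (Fin n)} (h : ∀ x ∈ s, a < x) :
    xiI k n (insert a s) = xg k n a * xiI k n s := by
  rw [xiI, sort_insert _ (fun x hx => (h x hx).le) (fun ha => lt_irrefl a (h a ha))]
  rfl

theorem dxi_of_notMem {i : Fin n} {I : Finset (Fin n)} (hi : i ∉ I) : dxi k n i I = 0 :=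
  if_neg hi

theorem dxi_insert_of_lt (i : Fin n) {a : Fin n} {s : Finset (Fin n)}
    (h : ∀ x ∈ s, a < x) :
    dxi k n i (insert a s) = (if i = a then xiI k n s else 0) - xg k n a * dxi k n i s := by
  have ha : a ∉ s := fun ha => lt_irrefl a (h a ha)
  by_cases hia : i = a
  · subst hia
    have hfilter : (insert i s).filter (· < i) = ∅ :=
      filter_eq_empty_iff.mpr fun x hx => by
        rcases mem_insert.mp hx with rfl | hx
        exacts [lt_irrefl x, (h x hx).not_gt]
    rw [dxi, if_pos (mem_insert_self i s), hfilter, erase_insert ha, dxi_of_notMem ha]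
    simp
  by_cases his : i ∈ s
  · have hai : a < i := h i his
    have hfilter : (insert a s).filter (· < i) = insert a (s.filter (· < i)) := by
      rw [filter_insert, if_pos hai]
    have herase : (insert a s).erase i = insert a (s.erase i) := erase_insert_of_ne (Ne.symm hia)
    rw [dxi, dxi, if_pos (mem_insert_of_mem his), if_pos his, if_neg hia, hfilter, herase,
      card_insert_of_notMem (fun h' => ha (mem_filter.mp h').1),
      xiI_insert_of_lt (fun x hx => h x (mem_of_mem_erase hx)), pow_succ, mul_neg_one,
      neg_smul, mul_smul_comm, zero_sub]
  · rw [dxi_of_notMem his, dxi_of_notMem (by simp [hia, his]), if_neg hia]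
    simp

theorem dg_mul_xiI (i : Fin n) (I : Finset (Fin n)) :
    dg k n i * xiI k n I = ((-1 : k) ^ #I) • (xiI k n I * dg k n i) + dxi k n i I := by
  induction I using induction_on_min with
  | empty => simp [xiI_empty, dxi_of_notMem (notMem_empty i)]
  | insert a s h ih =>
    rw [xiI_insert_of_lt h, dxi_insert_of_lt i h, ← mul_assoc, dg_mul_xg, sub_mul, mul_assoc,
      ih, card_insert_of_notMem (fun ha => lt_irrefl a (h a ha)), ite_mul, one_mul, zero_mul,
      mul_add, mul_smul_comm, pow_succ, mul_neg_one, neg_smul, mul_assoc]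
    abel

theorem xg_mul_dxi (i : Fin n) (I : Finset (Fin n)) :
    xg k n i * dxi k n i I = if i ∈ I then xiI k n I else 0 := by
  induction I using induction_on_min with
  | empty => simp [dxi_of_notMem (notMem_empty i)]
  | insert a s h ih =>
    have ha : a ∉ s := fun ha => lt_irrefl a (h a ha)
    rw [dxi_insert_of_lt i h, xiI_insert_of_lt h, mul_sub]
    by_cases hia : i = a
    · subst hia
      simp [dxi_of_notMem ha]
    · rw [if_neg hia, mul_zero, zero_sub, ← mul_assoc, xg_mul_xg, neg_mul, neg_neg, mul_assoc,
        ih, mul_ite, mul_zero]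
      simp only [mem_insert, hia, false_or]

theorem dg_mul_dxi (i : Fin n) (I : Finset (Fin n)) :
    dg k n i * dxi k n i I = -(((-1 : k) ^ #I) • (dxi k n i I * dg k n i)) := by
  by_cases hi : i ∈ I
  · have h := dg_mul_xiI (k := k) i (I.erase i)
    rw [dxi_of_notMem (notMem_erase i I), add_zero] at h
    rw [dxi, if_pos hi, mul_smul_comm, h, smul_mul_assoc, smul_smul, smul_smul, ← neg_smul,
      ← card_erase_add_one hi, pow_succ]
    congr 1
    ring
  · simp [dxi_of_notMem hi]

theorem sum_xg_mul_dxi (I : Finset (Fin n)) :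
    ∑ i, xg k n i * dxi k n i I = #I • xiI k n I := by
  simp only [xg_mul_dxi, sum_ite_mem, univ_inter, sum_const]

theorem dg_mul_xg_mul_xiI (i : Fin n) (I : Finset (Fin n)) :
    dg k n i * xg k n i * xiI k n I
      = xiI k n I - ((-1 : k) ^ #I) • (xg k n i * xiI k n I * dg k n i)
          - xg k n i * dxi k n i I := by
  rw [dg_mul_xg, if_pos rfl, sub_mul, one_mul, mul_assoc, dg_mul_xiI, mul_add, mul_smul_comm,
    ← mul_assoc]
  abel

theorem embA_eq_C_comp_C (a : An k n) : embA k n a = (Polynomial.C.comp Polynomial.C) a := rfl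

theorem embD_eq_embA_mul_X (a : An k n) : embD k n a = embA k n a * Polynomial.X := by
  rw [embD, embA, ← Polynomial.C_mul_X_eq_monomial]

theorem vmD_mul_embA (a : An k n) :
    vmD k n * embA k n a = vW k n * embA k n a - embD k n a := by
  rw [vmD, sub_mul, (Polynomial.commute_X (embA k n a)).eq, ← embD_eq_embA_mul_X, vW]

theorem embA_smul (c : k) (a : An k n) : embA k n (c • a) = c • embA k n a := by
  rw [embA, embA, ← Polynomial.smul_C, ← Polynomial.smul_C]

theorem ψ2_summand (i : Fin n) (I : Finset (Fin n)) :
    embD k n (dg k n i * xg k n i * xiI k n I) + embA k n (dg k n i * dxi k n i I)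
      = embD k n (xiI k n I) - embD k n (xg k n i * dxi k n i I)
        - ((-1 : k) ^ #I) •
            (embD k n (xg k n i * xiI k n I * dg k n i) + embA k n (dxi k n i I * dg k n i)) := by
  simp only [dg_mul_xg_mul_xiI, dg_mul_dxi, embD_eq_embA_mul_X, embA_eq_C_comp_C, map_sub,
    map_neg]
  simp only [← embA_eq_C_comp_C, embA_smul, sub_mul, smul_mul_assoc]
  module

theorem sum_ψ2_summand (I : Finset (Fin n)) :
    ∑ i, (embD k n (dg k n i * xg k n i * xiI k n I) + embA k n (dg k n i * dxi k n i I))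
      = ((n : k) - #I) • embD k n (xiI k n I)
        - ((-1 : k) ^ #I) •
            ∑ i, (embD k n (xg k n i * xiI k n I * dg k n i)
              + embA k n (dxi k n i I * dg k n i)) := by
  have euler : ∑ i, embD k n (xg k n i * dxi k n i I) = (#I : k) • embD k n (xiI k n I) := by
    simp only [embD, ← map_sum, sum_xg_mul_dxi, ← Nat.cast_smul_eq_nsmul k, Polynomial.smul_C,
      Polynomial.smul_monomial]
  rw [sum_congr rfl fun i _ => ψ2_summand i I, sum_sub_distrib, sum_sub_distrib, euler,
    sum_const, card_univ, Fintype.card_fin, ← smul_sum, ← Nat.cast_smul_eq_nsmul k, sub_smul]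

end

theorem stmt_15_general (k : Type) [Field k] (n : ℕ) :
    (∀ I : Finset (Fin n),
        ψ2 k n I = ψ1 k n I - ((n : k) - 2) • embD k n (xiI k n I)) ∧
    (n = 2 → ∀ I : Finset (Fin n), ψ1 k n I = ψ2 k n I) := by
  have key : ∀ I : Finset (Fin n),
      ψ2 k n I = ψ1 k n I - ((n : k) - 2) • embD k n (xiI k n I) := by
    intro I
    rw [ψ1, ψ2, sum_ψ2_summand, vmD_mul_embA]
    module
  refine ⟨key, fun hn I => ?_⟩
  have hcoeff : (n : k) - 2 = 0 := by rw [hn, Nat.cast_ofNat, sub_self]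
  rw [key, hcoeff, zero_smul, sub_zero]

/-- `ψ₂(g_I) = ψ₁(g_I) - (n-2)·(D ⊗ ξ_I)` for every `I ⊆ {1,…,n}`;
in particular `ψ₁ = ψ₂` when `n = 2`. -/
theorem stmt_15 (k : Type) [Field k] [CharZero k] (n : ℕ) (hn : 1 ≤ n) :
    (∀ I : Finset (Fin n),
        ψ2 k n I = ψ1 k n I - ((n : k) - 2) • embD k n (xiI k n I)) ∧
    (n = 2 → ∀ I : Finset (Fin n), ψ1 k n I = ψ2 k n I) :=
  stmt_15_general k n
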